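/- Let K ⊂ R^n (n ≥ 3) be a convex body such that every section of K by a hyperplane through a fixed interior point O is an (n−1)-dimensional ellipsoid. Then K is an ellipsoid. -/

import Mathlib

/-!
Translate `O` to the origin and let `g` be the gauge of `K`. Put `Q d = g d * g (-d)` and
`L d = g d - g (-d)`; since `Q d + L d - 1 = (g d - 1) (g (-d) + 1)`, the body is
`{d | Q d + L d ≤ 1}`. As `n ≥ 3`, any two directions lie in a hyperplane through `O`, and the
section there is, in affine coordinates `v`, an off-centre unit ball `‖v - c‖ ≤ 1`. Along each
line through `O` the reciprocals `(g d)⁻¹` and `-(g (-d))⁻¹` are the two roots of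
`t ↦ ‖t v - c‖² - 1`, so Vieta's formulas give `(1 - ‖c‖²) Q = ‖v‖²` and
`(1 - ‖c‖²) L = -2 ⟪c, v⟫` on the hyperplane. Thus `Q` obeys the parallelogram law and is a
positive definite quadratic form, `L` is linear, and completing the square exhibits `K` as an
ellipsoid.
-/

open Set Metric Function Bornology
open scoped RealInnerProductSpace Pointwise

noncomputable section

/-- The cone generated by `K` with apex `x`: `{x + t • (w - x) : w ∈ K, t ≥ 0}`. -/
def cone {n : ℕ} (K : Set (EuclideanSpace ℝ (Fin n))) (x : EuclideanSpace ℝ (Fin n)) :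
    Set (EuclideanSpace ℝ (Fin n)) :=
  {p | ∃ w ∈ K, ∃ t : ℝ, 0 ≤ t ∧ p = x + t • (w - x)}

/-- The support cone `S(K,x)`: the boundary of the cone generated by `K` with apex `x`. -/
def supportCone {n : ℕ} (K : Set (EuclideanSpace ℝ (Fin n))) (x : EuclideanSpace ℝ (Fin n)) :
    Set (EuclideanSpace ℝ (Fin n)) :=
  frontier (cone K x)

/-- A convex body: compact, convex, with nonempty interior. -/
def IsConvexBody {n : ℕ} (K : Set (EuclideanSpace ℝ (Fin n))) : Prop :=
  IsCompact K ∧ Convex ℝ K ∧ (interior K).Nonempty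

/-- An ellipsoid: a nondegenerate affine image of the closed unit ball. -/
def IsEllipsoid {n : ℕ} (K : Set (EuclideanSpace ℝ (Fin n))) : Prop :=
  ∃ f : EuclideanSpace ℝ (Fin n) ≃ᵃ[ℝ] EuclideanSpace ℝ (Fin n), K = f '' closedBall 0 1

/-- `K` has the strong intersection property relative to `O` and `S` with associated body `G`. -/
def StrongIntersectionProperty {n : ℕ} (O : EuclideanSpace ℝ (Fin n))
    (K S G : Set (EuclideanSpace ℝ (Fin n))) : Prop :=
  ∀ x ∈ frontier S, ∃ y ∈ frontier S, x ≠ y ∧ Collinear ℝ {x, O, y} ∧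
    ∃ u : EuclideanSpace ℝ (Fin n), u ≠ 0 ∧
      supportCone K x ∩ supportCone K y = {p | ⟪u, p - O⟫ = 0} ∩ G

open Filter Topology

section Gauge

variable {E : Type*} [NormedAddCommGroup E] [NormedSpace ℝ E] {s : Set E}

lemma preimage_const_add_mem_nhds_zero {G : Type*} [TopologicalSpace G] [AddZeroClass G]
    [ContinuousAdd G] {K : Set G} {O : G} (hO : K ∈ 𝓝 O) : (O + ·) ⁻¹' K ∈ 𝓝 0 :=
  (continuous_const_add O).continuousAt.preimage_mem_nhds (by rwa [add_zero])

lemma gauge_pos_of_isBounded (h0 : s ∈ 𝓝 0) (hb : IsBounded s) {d : E} (hd : d ≠ 0) :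
    0 < gauge s d :=
  (gauge_pos (absorbent_nhds_zero h0) (NormedSpace.isVonNBounded_of_isBounded ℝ hb)).2 hd

lemma gauge_preimage_linearMap {F : Type*} [AddCommGroup F] [Module ℝ F] (T : F →ₗ[ℝ] E)
    (s : Set E) (v : F) : gauge (T ⁻¹' s) v = gauge s (T v) := by
  simp only [gauge_def', mem_preimage, map_smul]

lemma smul_mem_iff_le_inv_gauge (hc : Convex ℝ s) (hcl : IsClosed s) (h0 : s ∈ 𝓝 0)
    (hb : IsBounded s) {d : E} (hd : d ≠ 0) {t : ℝ} (ht : 0 ≤ t) :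
    t • d ∈ s ↔ t ≤ (gauge s d)⁻¹ := by
  have hmem := gauge_le_one_iff_mem_closure hc h0 (x := t • d)
  rw [hcl.closure_eq] at hmem
  rw [← hmem, gauge_smul_of_nonneg ht, smul_eq_mul, ← one_div,
    le_div_iff₀ (gauge_pos_of_isBounded h0 hb hd)]

lemma smul_mem_iff_mem_Icc_gauge (hc : Convex ℝ s) (hcl : IsClosed s) (h0 : s ∈ 𝓝 0)
    (hb : IsBounded s) {d : E} (hd : d ≠ 0) (t : ℝ) :
    t • d ∈ s ↔ t ∈ Icc (-(gauge s (-d))⁻¹) (gauge s d)⁻¹ := by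
  rcases le_or_gt 0 t with ht | ht
  · rw [smul_mem_iff_le_inv_gauge hc hcl h0 hb hd ht, mem_Icc,
      and_iff_right (le_trans (neg_nonpos.2 (inv_nonneg.2 (gauge_nonneg _))) ht)]
  · rw [← neg_smul_neg, smul_mem_iff_le_inv_gauge hc hcl h0 hb (neg_ne_zero.2 hd) (by linarith),
      mem_Icc, neg_le, and_iff_left (ht.le.trans (inv_nonneg.2 (gauge_nonneg _)))]

lemma mem_iff_gauge_mul_gauge_neg_add_le_one (hc : Convex ℝ s) (hcl : IsClosed s)
    (h0 : s ∈ 𝓝 0) (d : E) :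
    d ∈ s ↔ gauge s d * gauge s (-d) + (gauge s d - gauge s (-d)) ≤ 1 := by
  have hmem := gauge_le_one_iff_mem_closure hc h0 (x := d)
  rw [hcl.closure_eq] at hmem
  rw [← hmem]
  have := gauge_nonneg (s := s) (-d)
  -- `g h + (g - h) - 1 = (g - 1) (h + 1)`
  constructor <;> intro h <;> nlinarith

end Gauge

lemma eq_zero_of_setOf_nonpos_eq_Icc {f : ℝ → ℝ} (hf : Continuous f) {a b : ℝ} (hab : a ≤ b)
    (h : {t | f t ≤ 0} = Icc a b) : f a = 0 ∧ f b = 0 := by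
  have hmem : ∀ t, f t ≤ 0 ↔ t ∈ Icc a b := fun t => by rw [← h]; rfl
  refine ⟨le_antisymm ((hmem a).2 ⟨le_rfl, hab⟩) ?_, le_antisymm ((hmem b).2 ⟨hab, le_rfl⟩) ?_⟩
  · refine ge_of_tendsto (hf.continuousWithinAt (s := Iio a)).tendsto ?_
    filter_upwards [self_mem_nhdsWithin] with t ht
    exact le_of_lt (not_le.1 fun h' => absurd ((hmem t).1 h').1 (not_le.2 ht))
  · refine ge_of_tendsto (hf.continuousWithinAt (s := Ioi b)).tendsto ?_
    filter_upwards [self_mem_nhdsWithin] with t ht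
    exact le_of_lt (not_le.1 fun h' => absurd ((hmem t).1 h').2 (not_le.2 ht))

lemma vieta_of_setOf_quadratic_nonpos_eq_Icc {α β γ g h : ℝ} (hg : 0 < g) (hh : 0 < h)
    (H : {t | α * t ^ 2 + 2 * β * t - γ ≤ 0} = Icc (-h⁻¹) g⁻¹) :
    γ * (g * h) = α ∧ γ * (g - h) = 2 * β := by
  obtain ⟨hroot_h, hroot_g⟩ := eq_zero_of_setOf_nonpos_eq_Icc (by fun_prop)
    ((neg_neg_of_pos (inv_pos.2 hh)).trans (inv_pos.2 hg)).le H
  have eg : α + 2 * β * g - γ * g ^ 2 = 0 := by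
    field_simp at hroot_g; linear_combination hroot_g
  have eh : α - 2 * β * h - γ * h ^ 2 = 0 := by
    field_simp at hroot_h; linear_combination hroot_h
  have hdiff : γ * (g - h) = 2 * β := by
    refine mul_left_cancel₀ (add_pos hg hh).ne' ?_
    linear_combination eh - eg
  exact ⟨by linear_combination (-(eg + eh) - (g - h) * hdiff) / 2, hdiff⟩

section Ball

variable {F : Type*} [NormedAddCommGroup F] [InnerProductSpace ℝ F]

lemma gauge_closedBall_of_norm_lt_one {c : F} (hc : ‖c‖ < 1) (v : F) :
    (1 - ‖c‖ ^ 2) * (gauge (closedBall c 1) v * gauge (closedBall c 1) (-v)) = ‖v‖ ^ 2 ∧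
      (1 - ‖c‖ ^ 2) * (gauge (closedBall c 1) v - gauge (closedBall c 1) (-v)) =
        -2 * ⟪c, v⟫ := by
  rcases eq_or_ne v 0 with rfl | hv
  · simp [gauge_zero]
  have h0 : closedBall c 1 ∈ 𝓝 (0 : F) :=
    mem_of_superset (isOpen_ball.mem_nhds (by simpa [dist_comm] using hc)) ball_subset_closedBall
  have hline : {t : ℝ | ‖v‖ ^ 2 * t ^ 2 + 2 * (-⟪c, v⟫) * t - (1 - ‖c‖ ^ 2) ≤ 0} =
      Icc (-(gauge (closedBall c 1) (-v))⁻¹) (gauge (closedBall c 1) v)⁻¹ := by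
    ext t
    rw [← smul_mem_iff_mem_Icc_gauge (convex_closedBall c 1) isClosed_closedBall h0
      isBounded_closedBall hv, mem_closedBall, dist_eq_norm, ← sq_le_one_iff₀ (norm_nonneg _),
      norm_sub_sq_real, norm_smul, real_inner_smul_left, mul_pow, Real.norm_eq_abs, sq_abs,
      real_inner_comm, mem_ofPred_eq]
    constructor <;> intro h <;> linarith
  obtain ⟨hprod, hdiff⟩ :=
    vieta_of_setOf_quadratic_nonpos_eq_Icc (gauge_pos_of_isBounded h0 isBounded_closedBall hv)
      (gauge_pos_of_isBounded h0 isBounded_closedBall (neg_ne_zero.2 hv)) hline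
  exact ⟨hprod, by linarith⟩

lemma gauge_apply_of_preimage_eq_closedBall {E : Type*} [NormedAddCommGroup E] [NormedSpace ℝ E]
    [FiniteDimensional ℝ F] {s : Set E} (h0 : s ∈ 𝓝 0) (T : F →ₗ[ℝ] E) {c : F}
    (hT : T ⁻¹' s = closedBall c 1) :
    0 < 1 - ‖c‖ ^ 2 ∧ ∀ v, (1 - ‖c‖ ^ 2) * (gauge s (T v) * gauge s (-T v)) = ‖v‖ ^ 2 ∧
      (1 - ‖c‖ ^ 2) * (gauge s (T v) - gauge s (-T v)) = -2 * ⟪c, v⟫ := by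
  have hc : ‖c‖ < 1 := by
    have hnhds : closedBall c 1 ∈ 𝓝 (0 : F) :=
      hT ▸ T.continuous_of_finiteDimensional.continuousAt.preimage_mem_nhds (by rwa [map_zero])
    have := mem_interior_iff_mem_nhds.2 hnhds
    rwa [interior_closedBall _ one_ne_zero, mem_ball, dist_zero_left] at this
  refine ⟨by nlinarith [norm_nonneg c], fun v => ?_⟩
  rw [← map_neg, ← gauge_preimage_linearMap, ← gauge_preimage_linearMap, hT]
  exact gauge_closedBall_of_norm_lt_one hc v

end Ball

section QuadraticOfPlanes

open QuadraticMap

variable {M F : Type*} [AddCommGroup M] [AddCommGroup F]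

lemma polar_add_left_of_parallelogram {Q : M → ℝ}
    (h : ∀ x y, Q (x + y) + Q (x - y) = 2 * Q x + 2 * Q y) (x x' y : M) :
    polar Q (x + x') y = polar Q x y + polar Q x' y := by
  have h₁ := h (x + y) x'
  have h₂ := h (x' + y) x
  have h₃ := h y (x - x')
  have h₄ := h x x'
  rw [show x + y + x' = x + x' + y by abel, show x + y - x' = y + (x - x') by abel] at h₁
  rw [show x' + y + x = x + x' + y by abel, show x' + y - x = y - (x - x') by abel] at h₂
  simp only [polar]
  linarith

variable [Module ℝ M] [Module ℝ F]

lemma QuadraticMap.map_add_add_map_sub (q : QuadraticForm ℝ F) (a b : F) :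
    q (a + b) + q (a - b) = 2 * q a + 2 * q b := by
  have h := q.polar_neg_right a b
  simp only [polar, q.map_neg, ← sub_eq_add_neg] at h
  linarith

lemma exists_quadraticForm_of_forall_pair (Q : M → ℝ)
    (h : ∀ x y : M, ∃ (T : F →ₗ[ℝ] M) (q : QuadraticForm ℝ F) (a b : F),
      T a = x ∧ T b = y ∧ ∀ v, Q (T v) = q v) :
    ∃ q : QuadraticForm ℝ M, ⇑q = Q := by
  refine ⟨QuadraticMap.ofPolar Q (fun t x => ?_) (polar_add_left_of_parallelogram
    fun x y => ?_) (fun t x y => ?_), rfl⟩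
  · obtain ⟨T, q, a, -, rfl, -, hq⟩ := h x x
    rw [← map_smul, hq, hq, q.map_smul]
  · obtain ⟨T, q, a, b, rfl, rfl, hq⟩ := h x y
    rw [← map_add, ← map_sub, hq, hq, hq, hq, q.map_add_add_map_sub]
  · obtain ⟨T, q, a, b, rfl, rfl, hq⟩ := h x y
    simp only [polar, ← map_smul, ← map_add, hq]
    exact q.polar_smul_left t a b

lemma exists_linearMap_of_forall_pair (L : M → ℝ)
    (h : ∀ x y : M, ∃ (T : F →ₗ[ℝ] M) (ℓ : F →ₗ[ℝ] ℝ) (a b : F),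
      T a = x ∧ T b = y ∧ ∀ v, L (T v) = ℓ v) :
    ∃ ℓ : M →ₗ[ℝ] ℝ, ⇑ℓ = L := by
  refine ⟨{ toFun := L, map_add' := fun x y => ?_, map_smul' := fun t x => ?_ }, rfl⟩
  · obtain ⟨T, ℓ, a, b, rfl, rfl, hℓ⟩ := h x y
    rw [← map_add, hℓ, hℓ, hℓ, map_add]
  · obtain ⟨T, ℓ, a, -, rfl, -, hℓ⟩ := h x x
    rw [← map_smul, hℓ, hℓ, map_smul, RingHom.id_apply]

end QuadraticOfPlanes

section Ellipsoid

variable {E : Type*} [NormedAddCommGroup E] [InnerProductSpace ℝ E] [FiniteDimensional ℝ E]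

lemma QuadraticMap.PosDef.exists_linearEquiv_sq_norm {q : QuadraticForm ℝ E} (hq : q.PosDef) :
    ∃ S : E ≃ₗ[ℝ] E, ∀ x, q x = ‖S x‖ ^ 2 := by
  obtain ⟨v, hv⟩ :=
    LinearMap.BilinForm.exists_orthogonal_basis (QuadraticForm.associated_isSymm ℝ q)
  have hpos : ∀ i, 0 < q (v i) := fun i => hq _ (v.ne_zero i)
  let b := v.unitsSMul fun i => Units.mk0 (√(q (v i)))⁻¹ (by have := hpos i; positivity)
  have hb : (QuadraticMap.associated (R := ℝ) q).IsOrthoᵢ b := fun i j hij => by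
    have := hv hij
    simp only [Function.onFun] at this ⊢
    simp [b, Module.Basis.unitsSMul_apply, this]
  have hb1 : ∀ i, q (b i) = 1 := fun i => by
    have := hpos i
    simp only [b, Module.Basis.unitsSMul_apply, Units.smul_def, Units.val_mk0, q.map_smul]
    rw [smul_eq_mul, ← mul_inv, Real.mul_self_sqrt this.le, inv_mul_cancel₀ this.ne']
  have hsum : ∀ x, q x = ∑ i, b.equivFun x i * b.equivFun x i := fun x => by
    have := congrArg (· (b.equivFun x)) (q.basisRepr_eq_of_iIsOrtho b hb)
    simpa [hb1] using this
  refine ⟨b.equivFun ≪≫ₗ (WithLp.linearEquiv 2 ℝ _).symm ≪≫ₗ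
    (stdOrthonormalBasis ℝ E).repr.symm.toLinearEquiv, fun x => ?_⟩
  simp only [hsum, LinearEquiv.trans_apply, LinearIsometryEquiv.coe_toLinearEquiv,
    LinearIsometryEquiv.norm_map, EuclideanSpace.real_norm_sq_eq]
  exact Finset.sum_congr rfl fun i _ => by rw [pow_two]; rfl

lemma exists_forall_sq_norm_add_le_one_iff (ℓ : E →ₗ[ℝ] ℝ) :
    ∃ c : E, ∃ r > 0, ∀ y, ‖y‖ ^ 2 + ℓ y ≤ 1 ↔ ‖y + c‖ ≤ r := by
  set c : E := (2⁻¹ : ℝ) • (InnerProductSpace.toDual ℝ E).symm ℓ.toContinuousLinearMap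
  have hc : ∀ y, ℓ y = 2 * ⟪y, c⟫ := fun y => by
    rw [inner_smul_right, real_inner_comm, InnerProductSpace.toDual_symm_apply]
    simp
  refine ⟨c, √(1 + ‖c‖ ^ 2), by positivity, fun y => ?_⟩
  rw [← sq_le_sq₀ (norm_nonneg _) (by positivity), Real.sq_sqrt (by positivity),
    norm_add_sq_real, hc]
  constructor <;> intro h <;> linarith

end Ellipsoid

lemma isEllipsoid_of_forall_mem_iff_norm_le {n : ℕ} {K : Set (EuclideanSpace ℝ (Fin n))}
    (S : EuclideanSpace ℝ (Fin n) ≃ₗ[ℝ] EuclideanSpace ℝ (Fin n)) (c : EuclideanSpace ℝ (Fin n))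
    {r : ℝ} (hr : 0 < r) (hK : ∀ z, z ∈ K ↔ ‖S z + c‖ ≤ r) : IsEllipsoid K := by
  let g := (S.trans (LinearEquiv.smulOfNeZero ℝ _ r⁻¹ (inv_ne_zero hr.ne'))).toAffineEquiv.trans
    (AffineEquiv.constVAdd ℝ _ (r⁻¹ • c))
  refine ⟨g.symm, Set.ext fun z => ?_⟩
  rw [AffineEquiv.image_symm, mem_preimage, mem_closedBall_zero_iff, hK]
  simp only [g, AffineEquiv.trans_apply, LinearEquiv.coe_toAffineEquiv, LinearEquiv.trans_apply,
    LinearEquiv.smulOfNeZero_apply, AffineEquiv.constVAdd_apply, vadd_eq_add, ← smul_add,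
    norm_smul, norm_inv, Real.norm_of_nonneg hr.le]
  rw [inv_mul_le_iff₀ hr, mul_one, add_comm]

lemma isEllipsoid_of_forall_mem_iff {n : ℕ} {K : Set (EuclideanSpace ℝ (Fin n))}
    {q : QuadraticForm ℝ (EuclideanSpace ℝ (Fin n))} (hq : q.PosDef)
    (ℓ : EuclideanSpace ℝ (Fin n) →ₗ[ℝ] ℝ) (O : EuclideanSpace ℝ (Fin n))
    (hK : ∀ z, z ∈ K ↔ q (z - O) + ℓ (z - O) ≤ 1) : IsEllipsoid K := by
  obtain ⟨S, hS⟩ := hq.exists_linearEquiv_sq_norm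
  obtain ⟨c, r, hr, hc⟩ := exists_forall_sq_norm_add_le_one_iff (ℓ ∘ₗ S.symm.toLinearMap)
  refine isEllipsoid_of_forall_mem_iff_norm_le S (c - S O) hr fun z => ?_
  have hz := hc (S (z - O))
  rw [LinearMap.comp_apply, LinearEquiv.coe_coe, S.symm_apply_apply, map_sub] at hz
  rw [hK, hS, map_sub, hz, show S z - S O + c = S z + (c - S O) by abel]

lemma exists_ne_zero_inner_eq_zero {E : Type*} [NormedAddCommGroup E] [InnerProductSpace ℝ E]
    (h3 : 3 ≤ Module.finrank ℝ E) (x y : E) : ∃ u ≠ 0, ⟪u, x⟫ = 0 ∧ ⟪u, y⟫ = 0 := by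
  classical
  set V := Submodule.span ℝ ((({x, y} : Finset E)) : Set E)
  have hV : Module.finrank ℝ V ≤ 2 := (finrank_span_finset_le_card _).trans Finset.card_le_two
  have hVperp : Vᗮ ≠ ⊥ := by
    rw [Ne, Submodule.orthogonal_eq_bot_iff]
    rintro hVtop
    rw [hVtop, finrank_top] at hV
    omega
  obtain ⟨u, hu, hu0⟩ := Submodule.exists_mem_ne_zero_of_ne_bot hVperp
  exact ⟨u, hu0, Submodule.inner_left_of_mem_orthogonal (Submodule.subset_span (by simp)) hu,
    Submodule.inner_left_of_mem_orthogonal (Submodule.subset_span (by simp)) hu⟩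

def HasEllipsoidalSections (F : Type*) [NormedAddCommGroup F] [NormedSpace ℝ F] {E : Type*}
    [NormedAddCommGroup E] [InnerProductSpace ℝ E] (K : Set E) (O : E) : Prop :=
  ∀ u : E, u ≠ 0 → ∃ f : F →ᵃ[ℝ] E, Injective f ∧ K ∩ {p | ⟪u, p - O⟫ = 0} = f '' closedBall 0 1

section Sections

variable {E F : Type*} [NormedAddCommGroup E] [InnerProductSpace ℝ E] [FiniteDimensional ℝ E]
  [NormedAddCommGroup F] [InnerProductSpace ℝ F] {K : Set E} {O : E}

lemma exists_preimage_linear_eq_closedBall_of_inter_hyperplane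
    (hdim : Module.finrank ℝ E = Module.finrank ℝ F + 1) {u : E} (hu : u ≠ 0) (hO : O ∈ K)
    (f : F →ᵃ[ℝ] E) (hf : Injective f) (hsec : K ∩ {p | ⟪u, p - O⟫ = 0} = f '' closedBall 0 1) :
    ∃ c : F, (O + f.linear ·) ⁻¹' K = closedBall c 1 ∧ LinearMap.range f.linear = (ℝ ∙ u)ᗮ := by
  have hmem_sec : ∀ p, p ∈ f '' closedBall 0 1 ↔ p ∈ K ∧ p - O ∈ (ℝ ∙ u)ᗮ := fun p => by
    rw [← hsec, Submodule.mem_orthogonal_singleton_iff_inner_right]; rfl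
  obtain ⟨y₀, -, hy₀⟩ := (hmem_sec O).2 ⟨hO, by simp⟩
  have hfy : ∀ v, f (y₀ + v) = O + f.linear v := fun v => by
    rw [add_comm y₀, ← vadd_eq_add, f.map_vadd, hy₀, vadd_eq_add, add_comm]
  have hspan : affineSpan ℝ (closedBall (0 : F) 1) = ⊤ := by
    refine affineSpan_eq_top_of_nonempty_interior ?_
    rw [(convex_closedBall _ _).convexHull_eq, interior_closedBall _ one_ne_zero]
    exact nonempty_ball.2 one_pos
  have hmapsTo : ∀ p, f p - O ∈ (ℝ ∙ u)ᗮ := by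
    have hle : affineSpan ℝ (f '' closedBall 0 1) ≤ AffineSubspace.mk' O (ℝ ∙ u)ᗮ :=
      affineSpan_le.2 fun p hp => AffineSubspace.mem_mk'.2 ((hmem_sec p).1 hp).2
    rw [← AffineSubspace.map_span, hspan] at hle
    exact fun p => AffineSubspace.mem_mk'.1 (hle (AffineSubspace.mem_map.2 ⟨p, trivial, rfl⟩))
  have hrange_le : LinearMap.range f.linear ≤ (ℝ ∙ u)ᗮ := by
    rintro _ ⟨v, rfl⟩
    simpa [hfy] using hmapsTo (y₀ + v)
  refine ⟨-y₀, Set.ext fun v => ?_, ?_⟩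
  · rw [mem_preimage, ← hfy, mem_closedBall, dist_eq_norm, sub_neg_eq_add, add_comm v,
      ← mem_closedBall_zero_iff, ← hf.mem_set_image, hmem_sec, and_iff_left (hmapsTo _)]
  · refine Submodule.eq_of_le_of_finrank_eq hrange_le ?_
    rw [LinearMap.finrank_range_of_inj (f.linear_injective_iff.2 hf),
      Submodule.finrank_orthogonal_span_singleton (_i := ⟨hdim⟩) hu]

variable [FiniteDimensional ℝ F]

lemma HasEllipsoidalSections.exists_plane (hsec : HasEllipsoidalSections F K O)
    (hdim : Module.finrank ℝ E = Module.finrank ℝ F + 1) (h3 : 3 ≤ Module.finrank ℝ E)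
    (hO : K ∈ 𝓝 O) (x y : E) :
    ∃ (T : F →ₗ[ℝ] E) (a b : F), T a = x ∧ T b = y ∧ ∃ γ > 0, ∃ c : F, ∀ v,
      γ * (gauge ((O + ·) ⁻¹' K) (T v) * gauge ((O + ·) ⁻¹' K) (-T v)) = ‖v‖ ^ 2 ∧
      γ * (gauge ((O + ·) ⁻¹' K) (T v) - gauge ((O + ·) ⁻¹' K) (-T v)) = -2 * ⟪c, v⟫ := by
  obtain ⟨u, hu, hxu, hyu⟩ := exists_ne_zero_inner_eq_zero h3 x y
  obtain ⟨f, hf, hfK⟩ := hsec u hu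
  obtain ⟨c, hT, hrange⟩ := exists_preimage_linear_eq_closedBall_of_inter_hyperplane hdim hu
    (mem_of_mem_nhds hO) f hf hfK
  obtain ⟨a, rfl⟩ : x ∈ LinearMap.range f.linear :=
    hrange ▸ Submodule.mem_orthogonal_singleton_iff_inner_right.2 hxu
  obtain ⟨b, rfl⟩ : y ∈ LinearMap.range f.linear :=
    hrange ▸ Submodule.mem_orthogonal_singleton_iff_inner_right.2 hyu
  obtain ⟨hγ, hgauge⟩ :=
    gauge_apply_of_preimage_eq_closedBall (preimage_const_add_mem_nhds_zero hO) f.linear hT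
  exact ⟨f.linear, a, b, rfl, rfl, _, hγ, c, hgauge⟩

lemma HasEllipsoidalSections.exists_quadraticForm (hsec : HasEllipsoidalSections F K O)
    (hdim : Module.finrank ℝ E = Module.finrank ℝ F + 1) (h3 : 3 ≤ Module.finrank ℝ E)
    (hO : K ∈ 𝓝 O) (hK : IsBounded K) :
    ∃ (q : QuadraticForm ℝ E) (ℓ : E →ₗ[ℝ] ℝ), q.PosDef ∧ ∀ d,
      q d = gauge ((O + ·) ⁻¹' K) d * gauge ((O + ·) ⁻¹' K) (-d) ∧
      ℓ d = gauge ((O + ·) ⁻¹' K) d - gauge ((O + ·) ⁻¹' K) (-d) := by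
  set s := (O + ·) ⁻¹' K
  obtain ⟨q, hq⟩ := exists_quadraticForm_of_forall_pair (F := F)
    (fun d => gauge s d * gauge s (-d)) fun x y => by
      obtain ⟨T, a, b, hTa, hTb, γ, hγ, _, h⟩ := hsec.exists_plane hdim h3 hO x y
      refine ⟨T, γ⁻¹ • LinearMap.BilinMap.toQuadraticMap (innerₗ F), a, b, hTa, hTb, fun v => ?_⟩
      simp only [smul_apply, LinearMap.BilinMap.toQuadraticMap_apply, innerₗ_apply_apply,
        real_inner_self_eq_norm_sq, smul_eq_mul]
      rw [← (h v).1, inv_mul_cancel_left₀ hγ.ne']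
  obtain ⟨ℓ, hℓ⟩ := exists_linearMap_of_forall_pair (F := F)
    (fun d => gauge s d - gauge s (-d)) fun x y => by
      obtain ⟨T, a, b, hTa, hTb, γ, hγ, c, h⟩ := hsec.exists_plane hdim h3 hO x y
      refine ⟨T, (-2 * γ⁻¹) • innerₗ F c, a, b, hTa, hTb, fun v => ?_⟩
      rw [LinearMap.smul_apply, innerₗ_apply_apply, smul_eq_mul, mul_assoc, ← mul_left_comm,
        ← (h v).2, inv_mul_cancel_left₀ hγ.ne']
  have h0 : s ∈ 𝓝 0 := preimage_const_add_mem_nhds_zero hO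
  have hs : IsBounded s := (IsometryEquiv.addLeft O).isometry.antilipschitz.isBounded_preimage hK
  refine ⟨q, ℓ, fun d hd => ?_, fun d => ⟨congrFun hq d, congrFun hℓ d⟩⟩
  rw [hq]
  exact mul_pos (gauge_pos_of_isBounded h0 hs hd) (gauge_pos_of_isBounded h0 hs (neg_ne_zero.2 hd))

end Sections

/-- Busemann 16.12: if every section of a convex body `K` by a hyperplane through a
fixed interior point `O` is an (n-1)-dimensional ellipsoid, then `K` is an ellipsoid. -/
theorem stmt14 {n : ℕ} (hn : 3 ≤ n) (K : Set (EuclideanSpace ℝ (Fin n)))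
    (hK : IsConvexBody K) (O : EuclideanSpace ℝ (Fin n)) (hO : O ∈ interior K)
    (hsec : ∀ u : EuclideanSpace ℝ (Fin n), u ≠ 0 →
      ∃ f : EuclideanSpace ℝ (Fin (n - 1)) →ᵃ[ℝ] EuclideanSpace ℝ (Fin n),
        Function.Injective f ∧ K ∩ {p | ⟪u, p - O⟫ = 0} = f '' closedBall 0 1) :
    IsEllipsoid K := by
  obtain ⟨hKc, hKconv, -⟩ := hK
  have hOK : K ∈ 𝓝 O := mem_interior_iff_mem_nhds.1 hO
  have hdim : Module.finrank ℝ (EuclideanSpace ℝ (Fin n)) =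
      Module.finrank ℝ (EuclideanSpace ℝ (Fin (n - 1))) + 1 := by simp; omega
  obtain ⟨q, ℓ, hq, hqℓ⟩ :=
    HasEllipsoidalSections.exists_quadraticForm hsec hdim (by simpa) hOK hKc.isBounded
  refine isEllipsoid_of_forall_mem_iff hq ℓ O fun z => ?_
  rw [(hqℓ _).1, (hqℓ _).2, ← mem_iff_gauge_mul_gauge_neg_add_le_one
    (hKconv.translate_preimage_right O) (hKc.isClosed.preimage (continuous_const_add O))
    (preimage_const_add_mem_nhds_zero hOK), mem_preimage, add_sub_cancel]
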